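/- For all integers n ≥ 1, the determinant D(n+1, n+1, 0, 2) equals the Catalan number 1/(n+1) · C(2n, n), where the equality is of rational numbers. -/

import Mathlib

/-- Binomial coefficient `C(a,b)` for integers, with the convention that it is `0` when `b < 0`. -/
def ichoose (a b : ℤ) : ℤ := if 0 ≤ b then (a.toNat.choose b.toNat : ℤ) else 0

/-- The determinant `D(m,n,u,k)` of the `(n-1)×(n-1)` matrix with `(i,j)` entry
`C(m - max{u, (k-1)j}, 1 - i + j)` for `i, j = 1, …, n-1`. -/
def D (m n u k : ℤ) : ℤ :=
  Matrix.det (Matrix.of fun i j : Fin (n - 1).toNat =>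
    ichoose (m - max u ((k - 1) * ((j : ℤ) + 1))) (1 - ((i : ℤ) + 1) + ((j : ℤ) + 1)))

/-!
Writing `N` for `n`, the matrix is `A i j = C(N - j, j + 1 - i)` (`0 ≤ i, j < N`): upper
Hessenberg with unit subdiagonal. The signed ballot numbers `v k = (-1)^k (N + 1 - k) C(N + k, k)`
form a left null vector of `A` extended by its row `N`, which follows from a telescoping closed
form of the partial sums. Multiplying `A` on the left by the lower triangular matrix with rows
`v 0, …, v i` makes it upper triangular with diagonal `-v (i + 1)`, so `v 0 * det A = (-1)^N v N`,
i.e. `(N + 1) det A = C(2N, N)`.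
-/

open Finset Matrix

section Hessenberg

variable {R : Type*} [CommRing R] {n : ℕ}

theorem prod_mul_det_hessenberg (A : ℕ → ℕ → R) (v : ℕ → R)
    (h_sub : ∀ j, A (j + 1) j = 1) (h_zero : ∀ i j, j + 1 < i → A i j = 0)
    (h_null : ∀ j < n, ∑ k ∈ range (j + 2), v k * A k j = 0) :
    (∏ i : Fin n, v i) * (of fun i j : Fin n => A i j).det = ∏ i : Fin n, -v (i + 1) := by
  set L : Matrix (Fin n) (Fin n) R := of fun i k => if k ≤ i then v k else 0
  have hL : L.IsLowerTriangular := fun i k hik => if_neg (not_le.mpr hik)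
  have hLA (i j : Fin n) : (L * of fun i j : Fin n => A i j) i j =
      ∑ k ∈ range (i + 1), v k * A k j := by
    have h_range : (range n).filter (· ≤ (i : ℕ)) = range (i + 1) := by
      ext k; simp only [mem_filter, mem_range]; omega
    simp only [L, mul_apply, of_apply, ite_mul, zero_mul, Fin.le_def]
    rw [Fin.sum_univ_eq_sum_range (fun k => if k ≤ (i : ℕ) then v k * A k j else 0),
      ← sum_filter, h_range]
  have hU : (L * of fun i j : Fin n => A i j).IsUpperTriangular := by
    intro i j (hji : j < i)
    rw [hLA, ← h_null j j.isLt]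
    refine (sum_subset (range_subset_range.mpr (by omega)) fun k _ hk => ?_).symm
    rw [h_zero k j (by simp at hk; omega), mul_zero]
  have h_diag (i : Fin n) : (L * of fun i j : Fin n => A i j) i i = -v (i + 1) := by
    have h_col := h_null i i.isLt
    rw [sum_range_succ, h_sub, mul_one] at h_col
    rw [hLA, eq_neg_of_add_eq_zero_left h_col]
  calc (∏ i : Fin n, v i) * (of fun i j : Fin n => A i j).det
      = (L * of fun i j : Fin n => A i j).det := by
        rw [det_mul, det_of_isLowerTriangular L hL]
        simp [L]
    _ = ∏ i : Fin n, -v (i + 1) := by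
        rw [det_of_isUpperTriangular hU]
        exact prod_congr rfl fun i _ => h_diag i

theorem mul_det_hessenberg [IsDomain R] (A : ℕ → ℕ → R) (v : ℕ → R)
    (h_sub : ∀ j, A (j + 1) j = 1) (h_zero : ∀ i j, j + 1 < i → A i j = 0)
    (h_null : ∀ j < n, ∑ k ∈ range (j + 2), v k * A k j = 0) (hv : ∀ k < n, v k ≠ 0) :
    v 0 * (of fun i j : Fin n => A i j).det = (-1) ^ n * v n := by
  have h_prod : ∏ i : Fin n, v i ≠ 0 := prod_ne_zero_iff.mpr fun i _ => hv i i.isLt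
  have h_succ := Fin.prod_univ_succ fun i : Fin (n + 1) => v i
  rw [Fin.prod_univ_castSucc] at h_succ
  simp only [Fin.val_castSucc, Fin.val_last, Fin.val_zero, Fin.val_succ] at h_succ
  apply mul_left_cancel₀ h_prod
  calc (∏ i : Fin n, v i) * (v 0 * (of fun i j : Fin n => A i j).det)
      = v 0 * ∏ i : Fin n, -v (i + 1) := by
        rw [mul_left_comm, prod_mul_det_hessenberg A v h_sub h_zero h_null]
    _ = (∏ i : Fin n, v i) * ((-1) ^ n * v n) := by
        rw [prod_neg, card_univ, Fintype.card_fin]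
        linear_combination (-1) ^ n * h_succ.symm

end Hessenberg

theorem Nat.cast_choose_succ_right_eq {R : Type*} [Ring R] (n k : ℕ) :
    (n.choose (k + 1) * (k + 1) : R) = n.choose k * ((n : R) - k) := by
  rcases le_or_gt k n with hkn | hnk
  · have h := congrArg (Nat.cast : ℕ → R) (Nat.choose_succ_right_eq n k)
    push_cast [Nat.cast_sub hkn] at h
    exact h
  · simp [Nat.choose_eq_zero_of_lt hnk, Nat.choose_eq_zero_of_lt (Nat.lt_succ_of_lt hnk)]

def ballotWeight (m k : ℕ) : ℤ := ((m : ℤ) + 1 - k) * (m + k).choose k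

theorem mul_sum_range_ballotWeight_mul_choose {m j K : ℕ} (hj : j ≤ m) (hK : K ≤ j + 1) :
    ((j : ℤ) + 1) *
        ∑ k ∈ range K, (-1) ^ k * ballotWeight m k * (m - j).choose (j + 1 - k) =
      (-1) ^ (K + 1) * ((K : ℤ) + m - 2 * j - 1) * K * (m + K).choose K *
        (m - j).choose (j + 1 - K) := by
  induction K with
  | zero => simp
  | succ K ih =>
    have h_up : ((m + K + 1).choose (K + 1) * (K + 1) : ℤ) =
        (m + K).choose K * ((m : ℤ) + K + 1) := by
      exact_mod_cast (Nat.add_one_mul_choose_eq (m + K) K).symm.trans (by ring)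
    have h_down : ((m - j).choose (j + 1 - K) * ((j : ℤ) + 1 - K) : ℤ) =
        (m - j).choose (j - K) * ((m : ℤ) - 2 * j + K) := by
      have h := Nat.cast_choose_succ_right_eq (R := ℤ) (m - j) (j - K)
      rw [show j - K + 1 = j + 1 - K by omega] at h
      push_cast [Nat.cast_sub hj, Nat.cast_sub (by omega : K ≤ j)] at h
      linear_combination h
    rw [sum_range_succ, mul_add, ih (by omega), ballotWeight]
    push_cast
    linear_combination (-1) ^ K * (-((K : ℤ) + m - 2 * j) * (m - j).choose (j - K)) * h_up
      + (-1) ^ K * ((m : ℤ) + K + 1) * (m + K).choose K * h_down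

theorem sum_range_ballotWeight_mul_choose_eq_zero {m j : ℕ} (hj : j ≤ m) :
    ∑ k ∈ range (j + 2), (-1) ^ k * ballotWeight m k * (m - j).choose (j + 1 - k) = 0 := by
  apply mul_left_cancel₀ (by positivity : (j : ℤ) + 1 ≠ 0)
  rw [sum_range_succ, mul_add, mul_sum_range_ballotWeight_mul_choose hj le_rfl,
    ballotWeight, Nat.sub_self, Nat.choose_zero_right]
  push_cast
  ring

theorem ichoose_natCast (a b : ℕ) : ichoose a b = a.choose b := by
  simp [ichoose]

theorem ichoose_of_neg (a : ℤ) {b : ℤ} (hb : b < 0) : ichoose a b = 0 :=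
  if_neg hb.not_ge

theorem det_ichoose_eq_catalan (N : ℕ) :
    (of fun i j : Fin N => ichoose ((N : ℤ) - j) ((j : ℤ) - i + 1)).det = catalan N := by
  have h := mul_det_hessenberg (n := N) (fun i j => ichoose ((N : ℤ) - j) ((j : ℤ) - i + 1))
    (fun k => (-1) ^ k * ballotWeight N k)
    (fun j => by simp [ichoose])
    (fun i j hij => ichoose_of_neg _ (by omega))
    (fun j hj => by
      rw [← sum_range_ballotWeight_mul_choose_eq_zero hj.le]
      refine sum_congr rfl fun k hk => ?_
      rw [mem_range] at hk
      rw [show (N : ℤ) - j = ((N - j : ℕ) : ℤ) by omega,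
        show (j : ℤ) - k + 1 = ((j + 1 - k : ℕ) : ℤ) by omega, ichoose_natCast])
    (fun k hk => by simp [ballotWeight, Nat.choose_ne_zero]; omega)
  apply mul_left_cancel₀ (by positivity : (N : ℤ) + 1 ≠ 0)
  simp only [ballotWeight, pow_zero, one_mul, Nat.cast_zero, sub_zero, add_zero,
    Nat.choose_zero_right, Nat.cast_one, mul_one] at h
  rw [h, ← mul_assoc, ← mul_pow, neg_one_mul, neg_neg, one_pow, one_mul, ← two_mul,
    ← Nat.centralBinom_eq_two_mul_choose, ← succ_mul_catalan_eq_centralBinom]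
  push_cast
  ring

theorem D_natCast_add_one_zero_two (N : ℕ) :
    D (N + 1) (N + 1) 0 2 =
      (of fun i j : Fin N => ichoose ((N : ℤ) - j) ((j : ℤ) - i + 1)).det := by
  have h_size : ((N : ℤ) + 1 - 1).toNat = N := by omega
  unfold D
  rw [h_size]
  congr 2
  ext i j
  rw [max_eq_right (by positivity)]
  ring_nf

theorem det_eq_catalan (n : ℤ) (hn : 1 ≤ n) :
    (D (n + 1) (n + 1) 0 2 : ℚ) = 1 / ((n : ℚ) + 1) * (ichoose (2 * n) n : ℚ) := by
  lift n to ℕ using (by omega : 0 ≤ n) with N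
  rw [D_natCast_add_one_zero_two, det_ichoose_eq_catalan,
    show 2 * (N : ℤ) = ((2 * N : ℕ) : ℤ) by push_cast; ring, ichoose_natCast,
    ← Nat.centralBinom_eq_two_mul_choose, ← succ_mul_catalan_eq_centralBinom]
  push_cast
  field_simp
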